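/- Let $p_1,\ldots,p_n$ be analytic at $0$ with $p_i(0)=1$, set $P_1=p_1$ and $P_i = p_i/p_{i-1}$ for $i\ge 2$. For indices $1\le j \le i \le n$, the nested multiple contour integral $\oint\frac{dv_1}{2\pi i}\cdots\oint\frac{dv_j}{2\pi i}\; \frac{v_1^{i-1} p_i(v_1)}{\left[\prod_{\ell=1}^{j-1}(v_\ell - v_{\ell+1})\right]\cdot\left[\prod_{\ell=1}^{j} v_\ell P_\ell(v_\ell)\right]}$ over nested small circles $|v_1| > \cdots > |v_j|$ around the origin equals $\delta_{ij}$ (i.e., equals $1$ if $i=j$ and $0$ if $i>j$). -/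

import Mathlib

open Finset

/-- `(2πi)⁻¹ ∮_{|v|=r} f(v) dv`. -/
noncomputable def cInt (r : ℝ) (f : ℂ → ℂ) : ℂ :=
  (2 * Real.pi * Complex.I)⁻¹ * ∮ v in C(0, r), f v

/-- Iterated (nested) contour integrals: `j` counterclockwise circles around `0` of radii
`r 0 > r 1 > ⋯ > r (j-1)`, the variable `v k` running over the circle of radius `r k`,
each integral carrying the factor `(2πi)⁻¹`. -/
noncomputable def nestedCI : ℕ → (ℕ → ℝ) → ((ℕ → ℂ) → ℂ) → ℂ
  | 0, _, F => F fun _ => 0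
  | j+1, r, F => cInt (r 0) fun v =>
      nestedCI j (fun k => r (k+1)) fun w => F fun k => match k with
        | 0 => v
        | k+1 => w k

/-!
Replace `p i` by any holomorphic `f` and `P` by any family `Q` of nonvanishing holomorphic
functions, and integrate out the outermost variable first. For fixed `v 1` the integrand is
`g (v 0) / (v 0 - v 1)` times a function of `v 1, …, v j`, where
`g a = a ^ (i-1) * f a / Q 0 a` is holomorphic on the outer disc because `i ≥ 1`. After exchanging
the two outermost integrals (Fubini), Cauchy's formula replaces `v 0` by `v 1`, which leaves an
integral of the same shape with one variable fewer, `f` replaced by `f / Q 0` and `Q` shifted by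
one. With a single variable left, Cauchy's formula at `0` gives `0 ^ i * f 0 / Q 0 0`. Hence the
value is `f 0 / ∏ ℓ ≤ j, Q ℓ 0` if `i = j` and `0` otherwise; for `f = p i` and `Q = P` all these
values are `1`.
-/

open Metric Set

lemma cInt_congr {r : ℝ} (hr : 0 ≤ r) {f g : ℂ → ℂ} (h : EqOn f g (sphere 0 r)) :
    cInt r f = cInt r g := by
  rw [cInt, cInt, circleIntegral.integral_congr hr h]

lemma cInt_const_mul (r : ℝ) (c : ℂ) (f : ℂ → ℂ) :
    cInt r (fun v => c * f v) = c * cInt r f := by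
  rw [cInt, cInt, circleIntegral.integral_const_mul, mul_left_comm]

lemma cInt_sub_inv_mul {r : ℝ} {g : ℂ → ℂ} (hg : DifferentiableOn ℂ g (closedBall 0 r))
    {w : ℂ} (hw : w ∈ ball 0 r) : cInt r (fun z => (z - w)⁻¹ * g z) = g w := by
  have h := hg.circleIntegral_sub_inv_smul hw
  simp only [smul_eq_mul] at h
  rw [cInt, h, inv_mul_cancel_left₀ Complex.two_pi_I_ne_zero]

lemma cInt_eq_intervalIntegral (r : ℝ) (f : ℂ → ℂ) :
    cInt r f = ∫ θ in 0..2 * Real.pi,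
      (2 * Real.pi * Complex.I)⁻¹ * (circleMap 0 r θ * Complex.I * f (circleMap 0 r θ)) := by
  rw [cInt, circleIntegral, intervalIntegral.integral_const_mul]
  simp only [deriv_circleMap, smul_eq_mul]

lemma continuous_cInt {X : Type*} [TopologicalSpace X] {r : ℝ} {F : X → ℂ → ℂ}
    (hF : Continuous fun p : X × ℝ => F p.1 (circleMap 0 r p.2)) :
    Continuous fun x => cInt r (F x) := by
  simp only [cInt_eq_intervalIntegral]
  exact intervalIntegral.continuous_parametric_intervalIntegral_of_continuous'
    (continuous_const.mul ((((continuous_circleMap 0 r).comp continuous_snd).mul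
      continuous_const).mul hF)) _ _

lemma cInt_comm {r s : ℝ} {H : ℂ → ℂ → ℂ}
    (hH : Continuous fun p : ℝ × ℝ => H (circleMap 0 r p.1) (circleMap 0 s p.2)) :
    cInt r (fun a => cInt s (H a)) = cInt s (fun b => cInt r (fun a => H a b)) := by
  simp only [cInt_eq_intervalIntegral, ← intervalIntegral.integral_const_mul]
  rw [MeasureTheory.intervalIntegral_intervalIntegral_swap]
  · refine intervalIntegral.integral_congr fun φ _ => intervalIntegral.integral_congr fun θ _ => ?_
    ring
  · have hc : Continuous (Function.uncurry fun θ φ : ℝ =>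
        (2 * Real.pi * Complex.I)⁻¹ * (circleMap 0 r θ * Complex.I *
          ((2 * Real.pi * Complex.I)⁻¹ * (circleMap 0 s φ * Complex.I *
            H (circleMap 0 r θ) (circleMap 0 s φ))))) := by
      have hcm : ∀ t, Continuous fun x : ℝ => circleMap 0 t x * Complex.I :=
        fun t => (continuous_circleMap 0 t).mul continuous_const
      exact continuous_const.mul (((hcm r).comp continuous_fst).mul
        (continuous_const.mul (((hcm s).comp continuous_snd).mul hH)))
    exact (hc.continuousOn.integrableOn_compact (isCompact_uIcc.prod isCompact_uIcc)).mono_set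
      (prod_mono uIoc_subset_uIcc uIoc_subset_uIcc)

def seqCons {α : Type*} (a : α) (w : ℕ → α) : ℕ → α
  | 0 => a
  | k+1 => w k

@[simp] lemma seqCons_zero {α : Type*} (a : α) (w : ℕ → α) : seqCons a w 0 = a := rfl

@[simp] lemma seqCons_succ {α : Type*} (a : α) (w : ℕ → α) (k : ℕ) :
    seqCons a w (k+1) = w k := rfl

lemma continuous_seqCons {α : Type*} [TopologicalSpace α] :
    Continuous fun p : α × (ℕ → α) => seqCons p.1 p.2 :=
  continuous_pi fun
    | 0 => continuous_fst
    | k+1 => (continuous_apply k).comp continuous_snd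

lemma nestedCI_succ (j : ℕ) (r : ℕ → ℝ) (F : (ℕ → ℂ) → ℂ) :
    nestedCI (j+1) r F =
      cInt (r 0) fun a => nestedCI j (fun k => r (k+1)) fun w => F (seqCons a w) := rfl

lemma nestedCI_one (r : ℕ → ℝ) (F : (ℕ → ℂ) → ℂ) :
    nestedCI 1 r F = cInt (r 0) fun a => F (seqCons a 0) := rfl

lemma nestedCI_const_mul (c : ℂ) : ∀ (j : ℕ) (r : ℕ → ℝ) (F : (ℕ → ℂ) → ℂ),
    nestedCI j r (fun w => c * F w) = c * nestedCI j r F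
  | 0, _, _ => rfl
  | j+1, r, F => by
    simp only [nestedCI_succ, nestedCI_const_mul c j, cInt_const_mul]

lemma nestedCI_succ_congr {j : ℕ} {r : ℕ → ℝ} (hr : 0 ≤ r 0) {F G : (ℕ → ℂ) → ℂ}
    (h : ∀ v : ℕ → ℂ, v 0 ∈ sphere 0 (r 0) → F v = G v) :
    nestedCI (j+1) r F = nestedCI (j+1) r G := by
  rw [nestedCI_succ, nestedCI_succ]
  exact cInt_congr hr fun a ha => congrArg _ (funext fun w => h (seqCons a w) ha)

/-- The points at which `nestedCI j r` evaluates its integrand. -/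
noncomputable def nestedTorusMap (r : ℕ → ℝ) (j : ℕ) (θ : ℕ → ℝ) : ℕ → ℂ :=
  fun k => if k < j then circleMap 0 (r k) (θ k) else 0

lemma seqCons_nestedTorusMap (r : ℕ → ℝ) (j : ℕ) (φ : ℝ) (θ : ℕ → ℝ) :
    seqCons (circleMap 0 (r 0) φ) (nestedTorusMap (fun k => r (k+1)) j θ) =
      nestedTorusMap r (j+1) (seqCons φ θ) := by
  funext k
  cases k <;> simp [nestedTorusMap]

lemma continuous_nestedCI {X : Type*} [TopologicalSpace X] :
    ∀ (j : ℕ) (r : ℕ → ℝ) (F : X → (ℕ → ℂ) → ℂ),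
    (Continuous fun p : X × (ℕ → ℝ) => F p.1 (nestedTorusMap r j p.2)) →
    Continuous fun x => nestedCI j r (F x)
  | 0, r, F, hF => (hF.comp (Continuous.prodMk_left (0 : ℕ → ℝ))).congr fun x => rfl
  | j+1, r, F, hF => by
    simp only [nestedCI_succ]
    refine continuous_cInt (continuous_nestedCI j _ _ ?_)
    simp only [seqCons_nestedTorusMap]
    exact hF.comp ((continuous_fst.comp continuous_fst).prodMk
      (continuous_seqCons.comp ((continuous_snd.comp continuous_fst).prodMk continuous_snd)))

lemma cInt_mul_cInt_sub_inv {r s : ℝ} (hs : 0 ≤ s) (hsr : s < r) {g β : ℂ → ℂ}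
    (hg : DifferentiableOn ℂ g (closedBall 0 r)) (hβ : Continuous fun φ => β (circleMap 0 s φ)) :
    cInt r (fun a => g a * cInt s (fun b => (a - b)⁻¹ * β b)) = cInt s (fun b => g b * β b) := by
  have hr : 0 ≤ r := hs.trans hsr.le
  have hgc : Continuous fun θ => g (circleMap 0 r θ) :=
    hg.continuousOn.comp_continuous (continuous_circleMap 0 r) (circleMap_mem_closedBall 0 hr)
  have hsub : Continuous fun p : ℝ × ℝ => (circleMap 0 r p.1 - circleMap 0 s p.2)⁻¹ := by
    refine (((continuous_circleMap 0 r).comp continuous_fst).sub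
      ((continuous_circleMap 0 s).comp continuous_snd)).inv₀ fun p => sub_ne_zero.2 fun h => ?_
    have := congrArg norm h
    simp only [Function.comp_apply] at this
    rw [norm_circleMap_zero, norm_circleMap_zero, abs_of_nonneg hr, abs_of_nonneg hs] at this
    exact hsr.ne' this
  calc cInt r (fun a => g a * cInt s (fun b => (a - b)⁻¹ * β b))
      = cInt r (fun a => cInt s (fun b => β b * ((a - b)⁻¹ * g a))) := by
        refine congrArg _ (funext fun a => ?_)
        rw [← cInt_const_mul]
        exact congrArg _ (funext fun b => by ring)
    _ = cInt s (fun b => cInt r (fun a => β b * ((a - b)⁻¹ * g a))) :=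
        cInt_comm ((hβ.comp continuous_snd).mul (hsub.mul (hgc.comp continuous_fst)))
    _ = cInt s (fun b => g b * β b) := by
        refine cInt_congr hs fun b hb => ?_
        have hb' : b ∈ ball 0 r := by
          rw [mem_sphere_zero_iff_norm] at hb
          rwa [mem_ball_zero_iff, hb]
        rw [cInt_const_mul, cInt_sub_inv_mul hg hb', mul_comm]

lemma nestedCI_residue_diag {j : ℕ} {r : ℕ → ℝ} (hr : 0 ≤ r 1) (hr01 : r 1 < r 0) {g : ℂ → ℂ}
    {G : (ℕ → ℂ) → ℂ} (hg : DifferentiableOn ℂ g (closedBall 0 (r 0)))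
    (hG : Continuous fun θ => G (nestedTorusMap (fun k => r (k+1)) (j+1) θ)) :
    nestedCI (j+1+1) r (fun v => g (v 0) * ((v 0 - v 1)⁻¹ * G (fun k => v (k+1)))) =
      nestedCI (j+1) (fun k => r (k+1)) (fun w => g (w 0) * G w) := by
  set β : ℂ → ℂ := fun b => nestedCI j (fun k => r (k+1+1)) (fun w => G (seqCons b w))
  have hβ : Continuous fun φ => β (circleMap 0 (r 1) φ) := by
    refine continuous_nestedCI j _ _ ?_
    simp only [seqCons_nestedTorusMap (fun k => r (k+1))]
    exact hG.comp continuous_seqCons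
  calc nestedCI (j+1+1) r (fun v => g (v 0) * ((v 0 - v 1)⁻¹ * G (fun k => v (k+1))))
      = cInt (r 0) (fun a => g a * cInt (r 1) (fun b => (a - b)⁻¹ * β b)) := by
        simp only [nestedCI_succ, seqCons_zero, seqCons_succ, nestedCI_const_mul, cInt_const_mul]
        rfl
    _ = cInt (r 1) (fun b => g b * β b) := cInt_mul_cInt_sub_inv hr hr01 hg hβ
    _ = nestedCI (j+1) (fun k => r (k+1)) (fun w => g (w 0) * G w) := by
        simp only [nestedCI_succ, seqCons_zero, nestedCI_const_mul]
        rfl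

def nestedDenom (Q : ℕ → ℂ → ℂ) (j : ℕ) (v : ℕ → ℂ) : ℂ :=
  (∏ ℓ ∈ range j, (v ℓ - v (ℓ+1))) * ∏ ℓ ∈ range (j+1), (v ℓ * Q ℓ (v ℓ))

lemma nestedDenom_succ (Q : ℕ → ℂ → ℂ) (j : ℕ) (v : ℕ → ℂ) :
    nestedDenom Q (j+1) v = (v 0 - v 1) * (v 0 * Q 0 (v 0)) *
      nestedDenom (fun ℓ => Q (ℓ+1)) j (fun k => v (k+1)) := by
  simp only [nestedDenom, prod_range_succ' _ j, prod_range_succ' _ (j+1)]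
  ring

lemma nestedDenom_congr (Q : ℕ → ℂ → ℂ) {j : ℕ} {v w : ℕ → ℂ} (h : ∀ k ≤ j, v k = w k) :
    nestedDenom Q j v = nestedDenom Q j w := by
  unfold nestedDenom
  congr 1
  · exact prod_congr rfl fun ℓ hℓ => by
      rw [Finset.mem_range] at hℓ
      rw [h ℓ hℓ.le, h (ℓ+1) hℓ]
  · exact prod_congr rfl fun ℓ hℓ => by rw [h ℓ (Nat.lt_succ_iff.1 (Finset.mem_range.1 hℓ))]

lemma continuous_inv_nestedDenom_nestedTorusMap {Q : ℕ → ℂ → ℂ} {j : ℕ} {R : ℝ}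
    {r : ℕ → ℝ} (hQ : ∀ ℓ ≤ j, ContinuousOn (Q ℓ) (ball 0 R))
    (hQ0 : ∀ ℓ ≤ j, ∀ z ∈ ball 0 R, Q ℓ z ≠ 0) (hr : ∀ k, 0 < r k) (hrR : ∀ k, r k < R)
    (hanti : ∀ k, r (k+1) < r k) :
    Continuous fun θ => (nestedDenom Q j (nestedTorusMap r (j+1) θ))⁻¹ := by
  set c : ℕ → (ℕ → ℝ) → ℂ := fun k θ => circleMap 0 (r k) (θ k)
  have hc : ∀ k, Continuous (c k) := fun k => (continuous_circleMap 0 _).comp (continuous_apply k)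
  have hc_norm : ∀ k θ, ‖c k θ‖ = r k := fun k θ => by
    simp only [c, norm_circleMap_zero, abs_of_pos (hr k)]
  have hc_mem : ∀ k θ, c k θ ∈ ball 0 R := fun k θ => by
    rw [mem_ball_zero_iff, hc_norm]; exact hrR k
  have htorus : ∀ θ, nestedDenom Q j (nestedTorusMap r (j+1) θ) = nestedDenom Q j (c · θ) :=
    fun θ => nestedDenom_congr Q fun k hk => if_pos (Nat.lt_succ_of_le hk)
  simp only [htorus]
  refine Continuous.inv₀ ?_ fun θ => mul_ne_zero ?_ ?_
  · refine (continuous_finsetProd _ fun ℓ _ => (hc ℓ).sub (hc (ℓ+1))).mul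
      (continuous_finsetProd _ fun ℓ hℓ => (hc ℓ).mul ?_)
    exact (hQ ℓ (Nat.lt_succ_iff.1 (Finset.mem_range.1 hℓ))).comp_continuous (hc ℓ) (hc_mem ℓ)
  · refine prod_ne_zero_iff.2 fun ℓ _ => sub_ne_zero.2 fun h => (hanti ℓ).ne ?_
    rw [← hc_norm ℓ θ, ← hc_norm (ℓ+1) θ, show c ℓ θ = c (ℓ+1) θ from h]
  · refine prod_ne_zero_iff.2 fun ℓ hℓ => mul_ne_zero ?_ ?_
    · rw [← norm_ne_zero_iff, hc_norm]; exact (hr ℓ).ne'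
    · exact hQ0 ℓ (Nat.lt_succ_iff.1 (Finset.mem_range.1 hℓ)) _ (hc_mem ℓ θ)

theorem nestedCI_pow_mul_div_nestedDenom {R : ℝ} (j : ℕ) {i : ℕ} {f : ℂ → ℂ}
    {Q : ℕ → ℂ → ℂ} {r : ℕ → ℝ} (hji : j ≤ i) (hf : DifferentiableOn ℂ f (ball 0 R))
    (hQ : ∀ ℓ ≤ j, DifferentiableOn ℂ (Q ℓ) (ball 0 R))
    (hQ0 : ∀ ℓ ≤ j, ∀ z ∈ ball 0 R, Q ℓ z ≠ 0) (hr : ∀ k, 0 < r k) (hrR : ∀ k, r k < R)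
    (hanti : ∀ k, r (k+1) < r k) :
    nestedCI (j+1) r (fun v => v 0 ^ i * f (v 0) / nestedDenom Q j v) =
      if i = j then f 0 / ∏ ℓ ∈ range (j+1), Q ℓ 0 else 0 := by
  induction j generalizing i f Q r with
  | zero =>
    have hg : DifferentiableOn ℂ (fun a => a ^ i * (f a / Q 0 a)) (closedBall 0 (r 0)) :=
      ((differentiableOn_pow i).mul (hf.div (hQ 0 le_rfl) (hQ0 0 le_rfl))).mono
        (closedBall_subset_ball (hrR 0))
    calc nestedCI 1 r (fun v => v 0 ^ i * f (v 0) / nestedDenom Q 0 v)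
        = cInt (r 0) (fun a => (a - 0)⁻¹ * (a ^ i * (f a / Q 0 a))) := by
          rw [nestedCI_one]
          refine congrArg _ (funext fun a => ?_)
          simp only [nestedDenom, zero_add, prod_range_zero, prod_range_one, seqCons_zero,
            div_eq_mul_inv, mul_inv, one_mul, sub_zero]
          ring
      _ = if i = 0 then f 0 / ∏ ℓ ∈ range 1, Q ℓ 0 else 0 := by
          rw [cInt_sub_inv_mul hg (mem_ball_self (hr 0)), zero_pow_eq]
          split_ifs <;> simp
  | succ j ih =>
    obtain ⟨i, rfl⟩ : ∃ i', i = i' + 1 := ⟨i - 1, by omega⟩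
    have hf' : DifferentiableOn ℂ (fun z => f z / Q 0 z) (ball 0 R) :=
      hf.div (hQ 0 (Nat.zero_le _)) (hQ0 0 (Nat.zero_le _))
    have hg : DifferentiableOn ℂ (fun a => a ^ i * (f a / Q 0 a)) (closedBall 0 (r 0)) :=
      ((differentiableOn_pow i).mul hf').mono (closedBall_subset_ball (hrR 0))
    have hQ' : ∀ ℓ ≤ j, DifferentiableOn ℂ (Q (ℓ+1)) (ball 0 R) := fun ℓ hℓ => hQ (ℓ+1) (by omega)
    have hQ0' : ∀ ℓ ≤ j, ∀ z ∈ ball 0 R, Q (ℓ+1) z ≠ 0 := fun ℓ hℓ => hQ0 (ℓ+1) (by omega)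
    calc nestedCI (j+1+1) r (fun v => v 0 ^ (i+1) * f (v 0) / nestedDenom Q (j+1) v)
        = nestedCI (j+1+1) r (fun v => v 0 ^ i * (f (v 0) / Q 0 (v 0)) *
            ((v 0 - v 1)⁻¹ * (nestedDenom (fun ℓ => Q (ℓ+1)) j (fun k => v (k+1)))⁻¹)) := by
          refine nestedCI_succ_congr (hr 0).le fun v hv => ?_
          have hv0 : v 0 ≠ 0 := ne_of_mem_sphere hv (hr 0).ne'
          rw [nestedDenom_succ]
          field_simp
          ring
      _ = nestedCI (j+1) (fun k => r (k+1)) (fun w => w 0 ^ i * (f (w 0) / Q 0 (w 0)) *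
            (nestedDenom (fun ℓ => Q (ℓ+1)) j w)⁻¹) :=
          nestedCI_residue_diag (g := fun a => a ^ i * (f a / Q 0 a))
            (G := fun w => (nestedDenom (fun ℓ => Q (ℓ+1)) j w)⁻¹) (hr 1).le (hanti 0) hg
            (continuous_inv_nestedDenom_nestedTorusMap (fun ℓ hℓ => (hQ' ℓ hℓ).continuousOn) hQ0'
              (fun k => hr (k+1)) (fun k => hrR (k+1)) (fun k => hanti (k+1)))
      _ = if i = j then f 0 / Q 0 0 / ∏ ℓ ∈ range (j+1), Q (ℓ+1) 0 else 0 := by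
          simpa only [div_eq_mul_inv] using ih (by omega) hf' hQ' hQ0' (fun k => hr (k+1))
            (fun k => hrR (k+1)) (fun k => hanti (k+1))
      _ = if i + 1 = j + 1 then f 0 / ∏ ℓ ∈ range (j+1+1), Q ℓ 0 else 0 := by
          rw [prod_range_succ' _ (j+1), div_div, mul_comm]
          simp only [add_left_inj]

/-- Indices are `0`-based: `j ≤ i < n` is the paper's `1 ≤ j ≤ i ≤ n`, and there are `j + 1`
integration variables. -/
theorem stmt8_general (n : ℕ) (p P : ℕ → ℂ → ℂ) (R₀ : ℝ)
    (hp : ∀ i < n, ∀ v ∈ Metric.closedBall (0 : ℂ) R₀, AnalyticAt ℂ (p i) v)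
    (hp0 : ∀ i < n, p i 0 = 1)
    (hpne : ∀ i < n, ∀ v ∈ Metric.closedBall (0 : ℂ) R₀, p i v ≠ 0)
    (hP0 : ∀ v, P 0 v = p 0 v)
    (hPs : ∀ ℓ, 0 < ℓ → ∀ v, P ℓ v = p ℓ v / p (ℓ - 1) v)
    (ρ : ℕ → ℝ) (hρpos : ∀ k, 0 < ρ k) (hρR : ∀ k, ρ k < R₀) (hρdec : ∀ k, ρ (k+1) < ρ k)
    (i j : ℕ) (hji : j ≤ i) (hin : i < n) :
    nestedCI (j + 1) ρ (fun v =>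
      v 0 ^ i * p i (v 0) / ((∏ ℓ ∈ Finset.range j, (v ℓ - v (ℓ+1))) *
        ∏ ℓ ∈ Finset.range (j + 1), (v ℓ * P ℓ (v ℓ)))) = if i = j then 1 else 0 := by
  have hdiff : ∀ ℓ < n, DifferentiableOn ℂ (p ℓ) (ball 0 R₀) := fun ℓ hℓ v hv =>
    (hp ℓ hℓ v (ball_subset_closedBall hv)).differentiableAt.differentiableWithinAt
  have hne : ∀ ℓ < n, ∀ v ∈ ball (0 : ℂ) R₀, p ℓ v ≠ 0 := fun ℓ hℓ v hv =>
    hpne ℓ hℓ v (ball_subset_closedBall hv)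
  have hP : ∀ ℓ ≤ i,
      DifferentiableOn ℂ (P ℓ) (ball 0 R₀) ∧ (∀ v ∈ ball 0 R₀, P ℓ v ≠ 0) ∧ P ℓ 0 = 1 := by
    rintro (_ | ℓ) hℓ
    · rw [funext hP0]
      exact ⟨hdiff 0 (by omega), hne 0 (by omega), hp0 0 (by omega)⟩
    · rw [funext (hPs (ℓ+1) ℓ.succ_pos), Nat.add_sub_cancel]
      refine ⟨(hdiff _ (by omega)).div (hdiff _ (by omega)) (hne _ (by omega)),
        fun v hv => div_ne_zero (hne _ (by omega) v hv) (hne _ (by omega) v hv), ?_⟩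
      dsimp only
      rw [hp0 _ (by omega), hp0 _ (by omega), div_one]
  refine (nestedCI_pow_mul_div_nestedDenom j hji (hdiff i hin)
    (fun ℓ hℓ => (hP ℓ (hℓ.trans hji)).1) (fun ℓ hℓ => (hP ℓ (hℓ.trans hji)).2.1)
    hρpos hρR hρdec).trans ?_
  split_ifs with hij
  · subst hij
    rw [prod_eq_one fun ℓ hℓ => (hP ℓ (Nat.lt_succ_iff.1 (Finset.mem_range.1 hℓ))).2.2,
      hp0 i hin, div_one]
  · rfl

/-- for `1 ≤ j ≤ i ≤ n` (here `0`-based: `j ≤ i < n`, with `j+1` integration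
variables), the nested integral
`∮⋯∮ v₁^{i-1} pᵢ(v₁)/([∏_{ℓ=1}^{j-1}(v_ℓ-v_{ℓ+1})]·[∏_{ℓ=1}^j v_ℓ P_ℓ(v_ℓ)]) (dv/2πi)ʲ`
over nested small circles `|v₁| > ⋯ > |v_j|` equals `δᵢⱼ`. -/
theorem stmt8 (n : ℕ) (p P : ℕ → ℂ → ℂ) (R₀ : ℝ) (hR₀ : 0 < R₀)
    (hp : ∀ i < n, ∀ v ∈ Metric.closedBall (0 : ℂ) R₀, AnalyticAt ℂ (p i) v)
    (hp0 : ∀ i < n, p i 0 = 1)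
    (hpne : ∀ i < n, ∀ v ∈ Metric.closedBall (0 : ℂ) R₀, p i v ≠ 0)
    (hP0 : ∀ v, P 0 v = p 0 v)
    (hPs : ∀ ℓ, 0 < ℓ → ∀ v, P ℓ v = p ℓ v / p (ℓ - 1) v)
    (ρ : ℕ → ℝ) (hρpos : ∀ k, 0 < ρ k) (hρR : ∀ k, ρ k < R₀) (hρdec : ∀ k, ρ (k+1) < ρ k)
    (i j : ℕ) (hji : j ≤ i) (hin : i < n) :
    nestedCI (j + 1) ρ (fun v =>
      v 0 ^ i * p i (v 0) / ((∏ ℓ ∈ Finset.range j, (v ℓ - v (ℓ+1))) *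
        ∏ ℓ ∈ Finset.range (j + 1), (v ℓ * P ℓ (v ℓ)))) = if i = j then 1 else 0 :=
  stmt8_general n p P R₀ hp hp0 hpne hP0 hPs ρ hρpos hρR hρdec i j hji hin
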